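/- Finiteness of the neighborhood envelope: suppose F̃ = H ⋆ N(0,σ²) for some probability measure H and σ > 0, and F̃ is within Kolmogorov–Smirnov distance η < 1/2 of the empirical distribution F_n of distinct points X_(1) < X_(n). Then σ ≤ (X_(n) - X_(1)) / (√(2π)(1 - 2η)). -/

import Mathlib

open MeasureTheory ProbabilityTheory Real Filter Set
open scoped NNReal Topology

/-!
The density of `H ⋆ N(0, σ²)` is an `H`-average of Gaussian densities, each bounded by
`(√(2π) σ)⁻¹`, so `F̃` grows at most at that rate. The KS bound forces `F̃ ≤ η` strictly left
of `X_(1)`, where `Fₙ = 0`, and `F̃(X_(n)) ≥ 1 - η`; letting the left point tend to `X_(1)`,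
`F̃` rises by at least `1 - 2η` over an interval of length `X_(n) - X_(1)`.
-/

lemma gaussianPDFReal_le_inv_sqrt (μ : ℝ) (v : ℝ≥0) (x : ℝ) :
    gaussianPDFReal μ v x ≤ (√(2 * π * v))⁻¹ := by
  rw [gaussianPDFReal]
  refine mul_le_of_le_one_right (by positivity) (exp_le_one_iff.2 ?_)
  exact div_nonpos_of_nonpos_of_nonneg (neg_nonpos.2 (sq_nonneg _)) (by positivity)

section GaussianMixture

variable (H : Measure ℝ) (v : ℝ≥0)

/-- The density of the Gaussian location mixture `H ⋆ N(0, v)`. -/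
noncomputable def gaussianMixturePDF (t : ℝ) : ℝ := ∫ ξ, gaussianPDFReal ξ v t ∂H

lemma gaussianMixturePDF_le [IsProbabilityMeasure H] (t : ℝ) :
    gaussianMixturePDF H v t ≤ (√(2 * π * v))⁻¹ :=
  calc gaussianMixturePDF H v t ≤ ∫ _, (√(2 * π * v))⁻¹ ∂H :=
        integral_mono_of_nonneg (.of_forall fun ξ => gaussianPDFReal_nonneg ξ v t)
          (integrable_const _) (.of_forall fun ξ => gaussianPDFReal_le_inv_sqrt ξ v t)
    _ = (√(2 * π * v))⁻¹ := by simp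

lemma integrable_gaussianMixturePDF [IsFiniteMeasure H] (hv : v ≠ 0) :
    Integrable (gaussianMixturePDF H v) := by
  have hmeas : AEStronglyMeasurable (fun p : ℝ × ℝ => gaussianPDFReal p.2 v p.1)
      (volume.prod H) := by
    refine Continuous.aestronglyMeasurable ?_
    simp only [gaussianPDFReal_def]
    fun_prop
  refine Integrable.integral_prod_left ((integrable_prod_iff' hmeas).2 ⟨?_, ?_⟩)
  · exact .of_forall fun ξ => integrable_gaussianPDFReal ξ v
  · have hone (ξ : ℝ) : ∫ t, ‖gaussianPDFReal ξ v t‖ = 1 := by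
      simp_rw [Real.norm_of_nonneg (gaussianPDFReal_nonneg _ _ _)]
      exact integral_gaussianPDFReal_eq_one ξ hv
    simp only [hone]
    exact integrable_const 1

end GaussianMixture

lemma integral_Iic_sub_integral_Iic_le {g : ℝ → ℝ} {C : ℝ} (hg : Integrable g)
    (hgC : ∀ t, g t ≤ C) {x y : ℝ} (hxy : x ≤ y) :
    (∫ t in Iic y, g t) - ∫ t in Iic x, g t ≤ C * (y - x) := by
  rw [intervalIntegral.integral_Iic_sub_Iic hg.integrableOn hg.integrableOn]
  calc ∫ t in x..y, g t ≤ ∫ _ in x..y, C :=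
        intervalIntegral.integral_mono_on hxy hg.intervalIntegrable intervalIntegrable_const
          fun t _ => hgC t
    _ = C * (y - x) := by rw [intervalIntegral.integral_const, smul_eq_mul, mul_comm]

section Empirical

variable {n : ℕ} (X : Fin n → ℝ)

lemma card_filter_le_div_eq_one (hn : 0 < n) {b : ℝ} (hb : ∀ i, X i ≤ b) :
    ((Finset.univ.filter (fun i => X i ≤ b)).card : ℝ) / n = 1 := by
  rw [Finset.filter_true_of_mem fun i _ => hb i, Finset.card_univ, Fintype.card_fin]
  exact div_self (by positivity)

lemma card_filter_le_div_eq_zero {x : ℝ} (hx : ∀ i, x < X i) :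
    ((Finset.univ.filter (fun i => X i ≤ x)).card : ℝ) / n = 0 := by
  rw [Finset.filter_false_of_mem fun i _ => not_le.2 (hx i)]
  simp

end Empirical

lemma one_sub_two_mul_le_of_abs_sub_le {F G : ℝ → ℝ} {η C a b : ℝ}
    (hFG : ∀ x, |F x - G x| ≤ η) (hFb : F b = 1) (hFa : ∀ x < a, F x = 0)
    (hG : ∀ x y, x ≤ y → G y - G x ≤ C * (y - x)) (hab : a ≤ b) :
    1 - 2 * η ≤ C * (b - a) := by
  have hbound : ∀ x < a, 1 - 2 * η ≤ C * (b - x) := by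
    intro x hx
    have hb := abs_le.1 (hFG b)
    have hx' := abs_le.1 (hFG x)
    rw [hFb] at hb
    rw [hFa x hx] at hx'
    linarith [hG x b (hx.le.trans hab)]
  have hlim : Tendsto (fun x => C * (b - x)) (𝓝[<] a) (𝓝 (C * (b - a))) :=
    ((continuous_const.mul (continuous_const.sub continuous_id)).tendsto a).mono_left
      nhdsWithin_le_nhds
  exact ge_of_tendsto hlim (eventually_nhdsWithin_of_forall hbound)

theorem neighborhood_envelope_finite_general
    (n : ℕ) (hn : 0 < n) (X : Fin n → ℝ)
    (σ η : ℝ) (hσ : 0 < σ) (hη : η < 1 / 2)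
    (H : Measure ℝ) [IsProbabilityMeasure H]
    (Ftil : ℝ → ℝ)
    (hF : ∀ x, Ftil x =
      ∫ t in Set.Iic x, (∫ ξ, gaussianPDFReal ξ ((σ ^ 2).toNNReal) t ∂H))
    (Fn : ℝ → ℝ)
    (hFn : ∀ x, Fn x = ((Finset.univ.filter (fun i => X i ≤ x)).card : ℝ) / (n : ℝ))
    (hKS : ∀ x, |Fn x - Ftil x| ≤ η)
    (a b : ℝ)
    (ha : ∀ i, a ≤ X i)
    (hb : ∀ i, X i ≤ b) :
    σ ≤ (b - a) / (Real.sqrt (2 * π) * (1 - 2 * η)) := by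
  set v := (σ ^ 2).toNNReal
  have hv : v ≠ 0 := by simpa [v] using hσ.ne'
  have hsqrt : √(2 * π * v) = √(2 * π) * σ := by
    rw [Real.coe_toNNReal _ (sq_nonneg σ), Real.sqrt_mul (by positivity), Real.sqrt_sq hσ.le]
  have hrise := one_sub_two_mul_le_of_abs_sub_le hKS
    (by rw [hFn]; exact card_filter_le_div_eq_one X hn hb)
    (fun x hx => by rw [hFn]; exact card_filter_le_div_eq_zero X fun i => hx.trans_le (ha i))
    (fun x y hxy => by
      rw [hF, hF]
      exact integral_Iic_sub_integral_Iic_le (integrable_gaussianMixturePDF H v hv)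
        (gaussianMixturePDF_le H v) hxy)
    ((ha ⟨0, hn⟩).trans (hb ⟨0, hn⟩))
  have hη' : 0 < 1 - 2 * η := by linarith
  rw [hsqrt, inv_mul_eq_div, le_div_iff₀ (by positivity)] at hrise
  rw [le_div_iff₀ (by positivity)]
  linarith

/-- Finiteness of the neighborhood envelope: if `F̃` is the CDF of `H ⋆ N(0,σ²)` and `F̃` is
within Kolmogorov–Smirnov distance `η < 1/2` of the empirical CDF `Fₙ` of points with
minimum `a` and maximum `b`, `a < b`, then `σ ≤ (b - a)/(√(2π)(1 - 2η))`. -/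
theorem neighborhood_envelope_finite
    (n : ℕ) (hn : 0 < n) (X : Fin n → ℝ)
    (σ η : ℝ) (hσ : 0 < σ) (hη : η < 1 / 2)
    (H : Measure ℝ) [IsProbabilityMeasure H]
    (Ftil : ℝ → ℝ)
    (hF : ∀ x, Ftil x =
      ∫ t in Set.Iic x, (∫ ξ, gaussianPDFReal ξ ((σ ^ 2).toNNReal) t ∂H))
    (Fn : ℝ → ℝ)
    (hFn : ∀ x, Fn x = ((Finset.univ.filter (fun i => X i ≤ x)).card : ℝ) / (n : ℝ))
    (hKS : ∀ x, |Fn x - Ftil x| ≤ η)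
    (a b : ℝ)
    (ha : ∀ i, a ≤ X i) (ha' : ∃ i, X i = a)
    (hb : ∀ i, X i ≤ b) (hb' : ∃ i, X i = b)
    (hab : a < b) :
    σ ≤ (b - a) / (Real.sqrt (2 * π) * (1 - 2 * η)) :=
  neighborhood_envelope_finite_general n hn X σ η hσ hη H Ftil hF Fn hFn hKS a b ha hb
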